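/- arXiv:1301.3552 — 7 statements merged into one kernel-verified Lean document; each statement's English description precedes it below -/
import Mathlib

section
/- Let N, m ≥ 1 and for i = 1,…,N let κ_i > 0 and ω_i > 0 be real numbers and ψ_i ∈ ℝ^m. For every ω ≥ 0, the m×m complex matrix P(jω) = Σ_{i=1}^N (1/((jω)² + κ_i(jω) + ω_i²))·ψ_iψ_iᵀ is well defined (all denominators are nonzero), its Hermitian-imaginary part satisfies the identity −(1/2)·j·(P(jω) − P(jω)ᴴ) = −ω·Σ_{i=1}^N (κ_i/((ω_i² − ω²)² + ω²κ_i²))·ψ_iψ_iᵀ, and this matrix is negative semidefinite. -/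
/-!
Write `d_i(ω) = (jω)² + κ_i jω + ω_i²`, a complex number with real part `ω_i² - ω²` and imaginary
part `ωκ_i`. Since each `ψ_iψ_iᵀ` is real symmetric, `-(j/2)(P - Pᴴ) = Σ Im(d_i⁻¹) ψ_iψ_iᵀ`, and
`Im(d_i⁻¹) = -ωκ_i / |d_i|²`. For `ω ≥ 0` these coefficients are `≤ 0`, so the negated matrix is a
nonnegative combination of the positive semidefinite outer products `ψ_iψ_iᵀ`.
-/

open Matrix Complex ComplexConjugate ComplexOrder

lemma Complex.neg_half_I_mul_sub_conj (w : ℂ) : -(1 / 2 : ℂ) * I * (w - conj w) = w.im := by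
  rw [sub_conj]
  push_cast
  linear_combination (-(w.im : ℂ)) * I_sq

section

variable {n : Type*}

lemma of_ofReal_mul_eq_vecMulVec (v : n → ℝ) :
    Matrix.of (fun a b => ((v a * v b : ℝ) : ℂ)) =
      vecMulVec (fun a => (v a : ℂ)) (star fun a => (v a : ℂ)) := by
  ext a b
  simp [vecMulVec_apply]

lemma posSemidef_of_ofReal_mul [Finite n] (v : n → ℝ) :
    (Matrix.of (fun a b => ((v a * v b : ℝ) : ℂ))).PosSemidef := by
  rw [of_ofReal_mul_eq_vecMulVec]
  exact posSemidef_vecMulVec_self_star _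

lemma neg_half_I_smul_sub_conjTranspose_sum [Fintype n] {ι : Type*} [Fintype ι] (c : ι → ℂ)
    (M : ι → Matrix n n ℂ) (hM : ∀ i, (M i).IsHermitian) :
    (-(1 / 2 : ℂ) * I) • ((∑ i, c i • M i) - (∑ i, c i • M i)ᴴ) = ∑ i, ((c i).im : ℂ) • M i := by
  simp only [conjTranspose_sum, conjTranspose_smul, (hM _).eq, ← Finset.sum_sub_distrib,
    ← sub_smul, Finset.smul_sum, smul_smul, star_def, neg_half_I_mul_sub_conj]

end

section ModeDenom

variable (κ ωn ω : ℝ)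

lemma modeDenom_eq_mk :
    (I * ω) ^ 2 + (κ : ℂ) * (I * ω) + (ωn : ℂ) ^ 2 = ⟨ωn ^ 2 - ω ^ 2, ω * κ⟩ := by
  apply Complex.ext <;> simp [sq] <;> ring

lemma normSq_modeDenom :
    normSq ((I * ω) ^ 2 + (κ : ℂ) * (I * ω) + (ωn : ℂ) ^ 2) =
      (ωn ^ 2 - ω ^ 2) ^ 2 + ω ^ 2 * κ ^ 2 := by
  rw [modeDenom_eq_mk, normSq_mk]
  ring

lemma im_inv_modeDenom :
    ((I * ω) ^ 2 + (κ : ℂ) * (I * ω) + (ωn : ℂ) ^ 2)⁻¹.im =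
      -ω * (κ / ((ωn ^ 2 - ω ^ 2) ^ 2 + ω ^ 2 * κ ^ 2)) := by
  rw [inv_im, normSq_modeDenom, modeDenom_eq_mk]
  ring

variable {κ ωn}

lemma modeDenom_ne_zero (hκ : κ ≠ 0) (hωn : ωn ≠ 0) :
    (I * ω) ^ 2 + (κ : ℂ) * (I * ω) + (ωn : ℂ) ^ 2 ≠ 0 := by
  rw [← normSq_pos, normSq_modeDenom]
  rcases eq_or_ne ω 0 with rfl | hω
  · norm_num
    positivity
  · positivity

end ModeDenom

theorem flexible_structure_neg_imaginary_general (N m : ℕ)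
    (κ ωn : Fin N → ℝ) (hκ : ∀ i, 0 < κ i) (hω : ∀ i, 0 < ωn i)
    (ψ : Fin N → Fin m → ℝ) :
    ∀ ω : ℝ, 0 ≤ ω →
      (∀ i, (Complex.I * ω) ^ 2 + (κ i : ℂ) * (Complex.I * ω) + ((ωn i : ℂ)) ^ 2 ≠ 0) ∧
      ((-(1 / 2 : ℂ) * Complex.I) •
          ((∑ i, ((Complex.I * ω) ^ 2 + (κ i : ℂ) * (Complex.I * ω) + ((ωn i : ℂ)) ^ 2)⁻¹ •
              Matrix.of (fun a b => ((ψ i a * ψ i b : ℝ) : ℂ))) -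
            (∑ i, ((Complex.I * ω) ^ 2 + (κ i : ℂ) * (Complex.I * ω) + ((ωn i : ℂ)) ^ 2)⁻¹ •
              Matrix.of (fun a b => ((ψ i a * ψ i b : ℝ) : ℂ)))ᴴ) =
        (-(ω : ℂ)) • ∑ i, ((κ i / ((ωn i ^ 2 - ω ^ 2) ^ 2 + ω ^ 2 * κ i ^ 2) : ℝ) : ℂ) •
              Matrix.of (fun a b => ((ψ i a * ψ i b : ℝ) : ℂ))) ∧
      (-((-(1 / 2 : ℂ) * Complex.I) •
          ((∑ i, ((Complex.I * ω) ^ 2 + (κ i : ℂ) * (Complex.I * ω) + ((ωn i : ℂ)) ^ 2)⁻¹ •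
              Matrix.of (fun a b => ((ψ i a * ψ i b : ℝ) : ℂ))) -
            (∑ i, ((Complex.I * ω) ^ 2 + (κ i : ℂ) * (Complex.I * ω) + ((ωn i : ℂ)) ^ 2)⁻¹ •
              Matrix.of (fun a b => ((ψ i a * ψ i b : ℝ) : ℂ)))ᴴ))).PosSemidef := by
  intro ω hω0
  have hP := neg_half_I_smul_sub_conjTranspose_sum
    (fun i => ((I * ω) ^ 2 + (κ i : ℂ) * (I * ω) + (ωn i : ℂ) ^ 2)⁻¹) _
    (fun i => (posSemidef_of_ofReal_mul (ψ i)).isHermitian)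
  simp only [im_inv_modeDenom, ofReal_mul (-ω), ofReal_neg ω] at hP
  refine ⟨fun i => modeDenom_ne_zero ω (hκ i).ne' (hω i).ne', ?_, ?_⟩
  · simp only [hP, Finset.smul_sum, smul_smul]
  · rw [hP, ← Finset.sum_neg_distrib]
    refine posSemidef_sum _ fun i _ => ?_
    rw [← neg_smul, ← neg_mul, neg_neg]
    have hcoeff : 0 ≤ κ i / ((ωn i ^ 2 - ω ^ 2) ^ 2 + ω ^ 2 * κ i ^ 2) :=
      div_nonneg (hκ i).le (by positivity)
    exact (posSemidef_of_ofReal_mul (ψ i)).smul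
      (mul_nonneg (zero_le_real.mpr hω0) (zero_le_real.mpr hcoeff))

theorem flexible_structure_neg_imaginary (N m : ℕ) (hN : 1 ≤ N) (hm : 1 ≤ m)
    (κ ωn : Fin N → ℝ) (hκ : ∀ i, 0 < κ i) (hω : ∀ i, 0 < ωn i)
    (ψ : Fin N → Fin m → ℝ) :
    ∀ ω : ℝ, 0 ≤ ω →
      (∀ i, (Complex.I * ω) ^ 2 + (κ i : ℂ) * (Complex.I * ω) + ((ωn i : ℂ)) ^ 2 ≠ 0) ∧
      ((-(1 / 2 : ℂ) * Complex.I) •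
          ((∑ i, ((Complex.I * ω) ^ 2 + (κ i : ℂ) * (Complex.I * ω) + ((ωn i : ℂ)) ^ 2)⁻¹ •
              Matrix.of (fun a b => ((ψ i a * ψ i b : ℝ) : ℂ))) -
            (∑ i, ((Complex.I * ω) ^ 2 + (κ i : ℂ) * (Complex.I * ω) + ((ωn i : ℂ)) ^ 2)⁻¹ •
              Matrix.of (fun a b => ((ψ i a * ψ i b : ℝ) : ℂ)))ᴴ) =
        (-(ω : ℂ)) • ∑ i, ((κ i / ((ωn i ^ 2 - ω ^ 2) ^ 2 + ω ^ 2 * κ i ^ 2) : ℝ) : ℂ) •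
              Matrix.of (fun a b => ((ψ i a * ψ i b : ℝ) : ℂ))) ∧
      (-((-(1 / 2 : ℂ) * Complex.I) •
          ((∑ i, ((Complex.I * ω) ^ 2 + (κ i : ℂ) * (Complex.I * ω) + ((ωn i : ℂ)) ^ 2)⁻¹ •
              Matrix.of (fun a b => ((ψ i a * ψ i b : ℝ) : ℂ))) -
            (∑ i, ((Complex.I * ω) ^ 2 + (κ i : ℂ) * (Complex.I * ω) + ((ωn i : ℂ)) ^ 2)⁻¹ •
              Matrix.of (fun a b => ((ψ i a * ψ i b : ℝ) : ℂ)))ᴴ))).PosSemidef :=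
  flexible_structure_neg_imaginary_general N m κ ωn hκ hω ψ
end

section
/- Let (A₁,B₁,C₁,D₁) and (A₂,B₂,C₂,D₂) be minimal realizations of m×m transfer functions R and R_s, and suppose both systems are negative imaginary. Let R_T(s) = R(s) + R_s(s). Then: (a) j(R_T(jω) − R_T(jω)ᴴ) ⪰ 0 for every ω ∈ (0,∞) such that jω is an eigenvalue of neither A₁ nor A₂; (b) for every ω₀ ∈ (0,∞) such that jω₀ is an eigenvalue of A₁ or A₂, the limit lim_{s→jω₀}(s − jω₀)·jR_T(s) exists and is positive semidefinite Hermitian. Moreover, if in addition A₁ is Hurwitz and the system (A₂,B₂,C₂,D₂) is strictly negative imaginary, then j(R_T(jω) − R_T(jω)ᴴ) ≻ 0 for every ω ∈ (0,∞), so R_T, with Hurwitz state matrix diag(A₁,A₂), is strictly negative imaginary. -/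
open Matrix Filter Topology ComplexOrder

/-- The (complex) eigenvalues of a real square matrix. -/
noncomputable def eigs {k : Type*} [Fintype k] [DecidableEq k] (A : Matrix k k ℝ) : Set ℂ :=
  spectrum ℂ (A.map Complex.ofReal)

/-- A real square matrix is Hurwitz if all of its (complex) eigenvalues have negative real
part. -/
noncomputable def IsHurwitz {k : Type*} [Fintype k] [DecidableEq k] (A : Matrix k k ℝ) : Prop :=
  ∀ μ ∈ eigs A, μ.re < 0

/-- Transfer function `R(s) = C (sI - A)⁻¹ B + D` of a real state-space system, as a
complex matrix. -/
noncomputable def tf {n m : ℕ} (A : Matrix (Fin n) (Fin n) ℝ) (B : Matrix (Fin n) (Fin m) ℝ)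
    (C : Matrix (Fin m) (Fin n) ℝ) (D : Matrix (Fin m) (Fin m) ℝ) (s : ℂ) :
    Matrix (Fin m) (Fin m) ℂ :=
  C.map (Complex.ofReal) * (s • (1 : Matrix (Fin n) (Fin n) ℂ) - A.map Complex.ofReal)⁻¹ *
      B.map Complex.ofReal + D.map Complex.ofReal

/-- A state-space realization `(A,B,C,D)` is minimal if the controllability matrix and the
observability matrix both have rank `n`. -/
def IsMinimal {n m : ℕ} (A : Matrix (Fin n) (Fin n) ℝ) (B : Matrix (Fin n) (Fin m) ℝ)
    (C : Matrix (Fin m) (Fin n) ℝ) : Prop :=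
  (Matrix.of fun (i : Fin n) (p : Fin n × Fin m) => (A ^ (p.1 : ℕ) * B) i p.2).rank = n ∧
  (Matrix.of fun (p : Fin n × Fin m) (i : Fin n) => (C * A ^ (p.1 : ℕ)) p.2 i).rank = n

/-- The system `(A,B,C,D)` is negative imaginary (NI). -/
noncomputable def IsNI {n m : ℕ} (A : Matrix (Fin n) (Fin n) ℝ) (B : Matrix (Fin n) (Fin m) ℝ)
    (C : Matrix (Fin m) (Fin n) ℝ) (D : Matrix (Fin m) (Fin m) ℝ) : Prop :=
  (∀ μ ∈ eigs A, μ ≠ 0 ∧ μ.re ≤ 0) ∧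
  (∀ ω : ℝ, 0 < ω → (Complex.I * ω) ∉ eigs A →
    (Complex.I • (tf A B C D (Complex.I * ω) - (tf A B C D (Complex.I * ω))ᴴ)).PosSemidef) ∧
  (∀ ω : ℝ, 0 < ω → (Complex.I * ω) ∈ eigs A →
    ∃ K : Matrix (Fin m) (Fin m) ℂ,
      Tendsto (fun s : ℂ => (s - Complex.I * ω) • Complex.I • tf A B C D s)
        (𝓝[≠] (Complex.I * ω)) (𝓝 K) ∧ K.PosSemidef)

/-- The system `(A,B,C,D)` is strictly negative imaginary (SNI). -/
noncomputable def IsSNI {n m : ℕ} (A : Matrix (Fin n) (Fin n) ℝ) (B : Matrix (Fin n) (Fin m) ℝ)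
    (C : Matrix (Fin m) (Fin n) ℝ) (D : Matrix (Fin m) (Fin m) ℝ) : Prop :=
  IsHurwitz A ∧
  (∀ ω : ℝ, 0 < ω →
    (Complex.I • (tf A B C D (Complex.I * ω) - (tf A B C D (Complex.I * ω))ᴴ)).PosDef)

/-! The sum splits termwise: `j(R_T - R_Tᴴ)` is the sum of the two `j(R - Rᴴ)`, and the residue
of `jR_T` at `jω₀` is the sum of the two residues, the one of a system without a pole at `jω₀`
being zero. Positive (semi)definiteness is preserved by sums, and the eigenvalues of the block
diagonal state matrix are those of `A₁` and `A₂`. -/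

section Eigenvalues

variable {k l : Type*} [Fintype k] [DecidableEq k] [Fintype l] [DecidableEq l]

lemma mem_eigs_iff_det (A : Matrix k k ℝ) (μ : ℂ) :
    μ ∈ eigs A ↔ (μ • (1 : Matrix k k ℂ) - A.map Complex.ofReal).det = 0 := by
  rw [eigs, spectrum.mem_iff, Matrix.isUnit_iff_isUnit_det, isUnit_iff_ne_zero, not_ne_iff,
    Algebra.algebraMap_eq_smul_one]

lemma eigs_fromBlocks_zero (A₁ : Matrix k k ℝ) (A₂ : Matrix l l ℝ) :
    eigs (fromBlocks A₁ 0 0 A₂) = eigs A₁ ∪ eigs A₂ := by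
  ext μ
  rw [Set.mem_union, mem_eigs_iff_det, mem_eigs_iff_det, mem_eigs_iff_det, fromBlocks_map,
    ← fromBlocks_one, fromBlocks_smul, sub_eq_add_neg, fromBlocks_neg, fromBlocks_add]
  simp only [Matrix.map_zero _ Complex.ofReal_zero, smul_zero, neg_zero, add_zero,
    ← sub_eq_add_neg, det_fromBlocks_zero₂₁, mul_eq_zero]

lemma IsHurwitz.fromBlocks_zero {A₁ : Matrix k k ℝ} {A₂ : Matrix l l ℝ} (h₁ : IsHurwitz A₁)
    (h₂ : IsHurwitz A₂) : IsHurwitz (fromBlocks A₁ 0 0 A₂) := by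
  intro μ hμ
  rw [eigs_fromBlocks_zero] at hμ
  exact hμ.elim (h₁ μ) (h₂ μ)

lemma IsHurwitz.I_mul_ofReal_notMem_eigs {A : Matrix k k ℝ} (h : IsHurwitz A) (ω : ℝ) :
    Complex.I * ω ∉ eigs A := fun hmem => by
  simpa using h _ hmem

end Eigenvalues

lemma tf_continuousAt {n m : ℕ} (A : Matrix (Fin n) (Fin n) ℝ) (B : Matrix (Fin n) (Fin m) ℝ)
    (C : Matrix (Fin m) (Fin n) ℝ) (D : Matrix (Fin m) (Fin m) ℝ) {p : ℂ} (hp : p ∉ eigs A) :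
    ContinuousAt (tf A B C D) p := by
  have hdet : (p • (1 : Matrix (Fin n) (Fin n) ℂ) - A.map Complex.ofReal).det ≠ 0 :=
    mt (mem_eigs_iff_det A p).mpr hp
  have hinv : ContinuousAt Inv.inv (p • (1 : Matrix (Fin n) (Fin n) ℂ) - A.map Complex.ofReal) :=
    continuousAt_matrix_inv _ (by simpa only [Ring.inverse_eq_inv'] using continuousAt_inv₀ hdet)
  have hpencil : Continuous fun s : ℂ => s • (1 : Matrix (Fin n) (Fin n) ℂ) - A.map Complex.ofReal :=
    (continuous_id.smul continuous_const).sub continuous_const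
  have hout : Continuous fun X : Matrix (Fin n) (Fin n) ℂ =>
      C.map Complex.ofReal * X * B.map Complex.ofReal + D.map Complex.ofReal :=
    ((continuous_const.matrix_mul continuous_id).matrix_mul continuous_const).add continuous_const
  exact hout.continuousAt.comp (ContinuousAt.comp (x := p) hinv hpencil.continuousAt)

lemma tendsto_sub_smul_nhdsNE_zero {E : Type*} [AddCommGroup E] [Module ℂ E] [TopologicalSpace E]
    [ContinuousSMul ℂ E] {f : ℂ → E} {p : ℂ} (hf : ContinuousAt f p) :
    Tendsto (fun s : ℂ => (s - p) • f s) (𝓝[≠] p) (𝓝 0) := by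
  have h : ContinuousAt (fun s : ℂ => (s - p) • f s) p :=
    (continuousAt_id.sub continuousAt_const).smul hf
  simpa using h.tendsto.mono_left nhdsWithin_le_nhds

lemma IsNI.exists_residue {n m : ℕ} {A : Matrix (Fin n) (Fin n) ℝ} {B : Matrix (Fin n) (Fin m) ℝ}
    {C : Matrix (Fin m) (Fin n) ℝ} {D : Matrix (Fin m) (Fin m) ℝ} (h : IsNI A B C D) {ω : ℝ}
    (hω : 0 < ω) :
    ∃ K : Matrix (Fin m) (Fin m) ℂ,
      Tendsto (fun s : ℂ => (s - Complex.I * ω) • Complex.I • tf A B C D s)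
        (𝓝[≠] (Complex.I * ω)) (𝓝 K) ∧ K.PosSemidef := by
  by_cases hpole : Complex.I * ω ∈ eigs A
  · exact h.2.2 ω hω hpole
  · have hcont : ContinuousAt (fun s => Complex.I • tf A B C D s) (Complex.I * ω) :=
      (tf_continuousAt A B C D hpole).const_smul Complex.I
    exact ⟨0, tendsto_sub_smul_nhdsNE_zero hcont, PosSemidef.zero⟩

lemma I_smul_sub_conjTranspose_add {k : Type*} (X Y : Matrix k k ℂ) :
    Complex.I • ((X + Y) - (X + Y)ᴴ) = Complex.I • (X - Xᴴ) + Complex.I • (Y - Yᴴ) := by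
  rw [conjTranspose_add, ← smul_add]
  abel_nf

theorem sum_of_ni_is_ni_general {n₁ n₂ m : ℕ}
    (A₁ : Matrix (Fin n₁) (Fin n₁) ℝ) (B₁ : Matrix (Fin n₁) (Fin m) ℝ)
    (C₁ : Matrix (Fin m) (Fin n₁) ℝ) (D₁ : Matrix (Fin m) (Fin m) ℝ)
    (A₂ : Matrix (Fin n₂) (Fin n₂) ℝ) (B₂ : Matrix (Fin n₂) (Fin m) ℝ)
    (C₂ : Matrix (Fin m) (Fin n₂) ℝ) (D₂ : Matrix (Fin m) (Fin m) ℝ)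
    (hNI₁ : IsNI A₁ B₁ C₁ D₁) (hNI₂ : IsNI A₂ B₂ C₂ D₂) :
    (∀ ω : ℝ, 0 < ω → (Complex.I * ω) ∉ eigs A₁ → (Complex.I * ω) ∉ eigs A₂ →
      (Complex.I •
        ((tf A₁ B₁ C₁ D₁ (Complex.I * ω) + tf A₂ B₂ C₂ D₂ (Complex.I * ω)) -
          (tf A₁ B₁ C₁ D₁ (Complex.I * ω) + tf A₂ B₂ C₂ D₂ (Complex.I * ω))ᴴ)).PosSemidef) ∧
    (∀ ω : ℝ, 0 < ω → ((Complex.I * ω) ∈ eigs A₁ ∨ (Complex.I * ω) ∈ eigs A₂) →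
      ∃ K : Matrix (Fin m) (Fin m) ℂ,
        Tendsto (fun s : ℂ =>
            (s - Complex.I * ω) • Complex.I • (tf A₁ B₁ C₁ D₁ s + tf A₂ B₂ C₂ D₂ s))
          (𝓝[≠] (Complex.I * ω)) (𝓝 K) ∧ K.PosSemidef) ∧
    (IsHurwitz A₁ → IsSNI A₂ B₂ C₂ D₂ →
      (∀ ω : ℝ, 0 < ω →
        (Complex.I •
          ((tf A₁ B₁ C₁ D₁ (Complex.I * ω) + tf A₂ B₂ C₂ D₂ (Complex.I * ω)) -
            (tf A₁ B₁ C₁ D₁ (Complex.I * ω) + tf A₂ B₂ C₂ D₂ (Complex.I * ω))ᴴ)).PosDef) ∧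
      IsHurwitz (Matrix.fromBlocks A₁ 0 0 A₂)) := by
  refine ⟨fun ω hω h₁ h₂ => ?_, fun ω hω _ => ?_, fun hH₁ hSNI₂ => ⟨fun ω hω => ?_, ?_⟩⟩
  · rw [I_smul_sub_conjTranspose_add]
    exact (hNI₁.2.1 ω hω h₁).add (hNI₂.2.1 ω hω h₂)
  · obtain ⟨K₁, hK₁, hK₁psd⟩ := hNI₁.exists_residue hω
    obtain ⟨K₂, hK₂, hK₂psd⟩ := hNI₂.exists_residue hω
    exact ⟨K₁ + K₂, by simpa only [smul_add] using hK₁.add hK₂, hK₁psd.add hK₂psd⟩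
  · rw [I_smul_sub_conjTranspose_add]
    exact PosDef.posSemidef_add (hNI₁.2.1 ω hω (hH₁.I_mul_ofReal_notMem_eigs ω)) (hSNI₂.2 ω hω)
  · exact hH₁.fromBlocks_zero hSNI₂.1

/-- Lemma: the sum of two NI systems is NI; moreover the sum of an NI system and an SNI system
is SNI. -/
theorem sum_of_ni_is_ni {n₁ n₂ m : ℕ}
    (A₁ : Matrix (Fin n₁) (Fin n₁) ℝ) (B₁ : Matrix (Fin n₁) (Fin m) ℝ)
    (C₁ : Matrix (Fin m) (Fin n₁) ℝ) (D₁ : Matrix (Fin m) (Fin m) ℝ)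
    (A₂ : Matrix (Fin n₂) (Fin n₂) ℝ) (B₂ : Matrix (Fin n₂) (Fin m) ℝ)
    (C₂ : Matrix (Fin m) (Fin n₂) ℝ) (D₂ : Matrix (Fin m) (Fin m) ℝ)
    (hmin₁ : IsMinimal A₁ B₁ C₁) (hmin₂ : IsMinimal A₂ B₂ C₂)
    (hNI₁ : IsNI A₁ B₁ C₁ D₁) (hNI₂ : IsNI A₂ B₂ C₂ D₂) :
    (∀ ω : ℝ, 0 < ω → (Complex.I * ω) ∉ eigs A₁ → (Complex.I * ω) ∉ eigs A₂ →
      (Complex.I •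
        ((tf A₁ B₁ C₁ D₁ (Complex.I * ω) + tf A₂ B₂ C₂ D₂ (Complex.I * ω)) -
          (tf A₁ B₁ C₁ D₁ (Complex.I * ω) + tf A₂ B₂ C₂ D₂ (Complex.I * ω))ᴴ)).PosSemidef) ∧
    (∀ ω : ℝ, 0 < ω → ((Complex.I * ω) ∈ eigs A₁ ∨ (Complex.I * ω) ∈ eigs A₂) →
      ∃ K : Matrix (Fin m) (Fin m) ℂ,
        Tendsto (fun s : ℂ =>
            (s - Complex.I * ω) • Complex.I • (tf A₁ B₁ C₁ D₁ s + tf A₂ B₂ C₂ D₂ s))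
          (𝓝[≠] (Complex.I * ω)) (𝓝 K) ∧ K.PosSemidef) ∧
    (IsHurwitz A₁ → IsSNI A₂ B₂ C₂ D₂ →
      (∀ ω : ℝ, 0 < ω →
        (Complex.I •
          ((tf A₁ B₁ C₁ D₁ (Complex.I * ω) + tf A₂ B₂ C₂ D₂ (Complex.I * ω)) -
            (tf A₁ B₁ C₁ D₁ (Complex.I * ω) + tf A₂ B₂ C₂ D₂ (Complex.I * ω))ᴴ)).PosDef) ∧
      IsHurwitz (Matrix.fromBlocks A₁ 0 0 A₂)) :=
  sum_of_ni_is_ni_general A₁ B₁ C₁ D₁ A₂ B₂ C₂ D₂ hNI₁ hNI₂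
end

section
/- Let M and N be m×m complex matrices such that j(M − Mᴴ) ⪰ 0, j(N − Nᴴ) ⪰ 0, and I − NM is invertible (equivalently, I − MN is invertible). Define the 2m×2m matrix T = [[M(I−NM)⁻¹, M(I−NM)⁻¹N], [N(I−MN)⁻¹M, N(I−MN)⁻¹]]. Then j(T − Tᴴ) ⪰ 0. -/
open Matrix Filter Topology ComplexOrder

/-!
With `G = diag(M, N)` and `J` the block swap, the closed loop is `T = G F` where
`F = (1 - J G)⁻¹`. Since `J` is Hermitian, `Fᴴ (1 - J G)ᴴ = 1` and `(1 - J G) F = 1` give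
`T - Tᴴ = Fᴴ ((1 - J G)ᴴ G - Gᴴ (1 - J G)) F = Fᴴ (G - Gᴴ) F`, and `j (G - Gᴴ)` is the
block-diagonal matrix of `j (M - Mᴴ)` and `j (N - Nᴴ)`, which is positive semidefinite.
A congruence preserves positive semidefiniteness.
-/

theorem IsSelfAdjoint.mul_sub_star_mul {R : Type*} [Ring R] [StarRing R] {J G F : R}
    (hJ : IsSelfAdjoint J) (hF : (1 - J * G) * F = 1) :
    G * F - star (G * F) = star F * (G - star G) * F := by
  have hF' : star F * (1 - star G * J) = 1 := by
    simpa [star_mul, hJ.star_eq] using congrArg star hF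
  calc G * F - star (G * F)
      = star F * (1 - star G * J) * G * F - star F * star G * ((1 - J * G) * F) := by
        rw [hF', hF, star_mul]; noncomm_ring
    _ = star F * (G - star G) * F := by noncomm_ring

namespace Matrix

variable {n : Type*} [Fintype n]

/-- No invertibility is needed: `det (1 - A * B) = det (1 - B * A)`, so either both inverses
are genuine or both are the junk value `0`. -/
theorem nonsing_inv_one_sub_mul_mul [DecidableEq n] {α : Type*} [CommRing α]
    (A B : Matrix n n α) : (1 - A * B)⁻¹ * A = A * (1 - B * A)⁻¹ := by
  by_cases h : IsUnit (1 - B * A).det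
  · have h' : IsUnit (1 - A * B).det := by rwa [det_one_sub_mul_comm]
    calc (1 - A * B)⁻¹ * A = (1 - A * B)⁻¹ * (A * (1 - B * A)) * (1 - B * A)⁻¹ := by
          rw [mul_assoc, mul_assoc, mul_nonsing_inv _ h, mul_one]
      _ = (1 - A * B)⁻¹ * ((1 - A * B) * A) * (1 - B * A)⁻¹ := by
          rw [show A * (1 - B * A) = (1 - A * B) * A by noncomm_ring]
      _ = A * (1 - B * A)⁻¹ := by rw [nonsing_inv_mul_cancel_left _ _ h']
  · have h' : ¬IsUnit (1 - A * B).det := by rwa [det_one_sub_mul_comm]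
    rw [nonsing_inv_apply_not_isUnit _ h, nonsing_inv_apply_not_isUnit _ h', zero_mul, mul_zero]

theorem one_sub_fromBlocks_swap_mul_mul_fromBlocks_inv_eq_one [DecidableEq n] {α : Type*}
    [CommRing α] {M N : Matrix n n α} (h : IsUnit (1 - N * M).det) :
    (1 - fromBlocks 0 1 1 0 * fromBlocks M 0 0 N) *
      fromBlocks (1 - N * M)⁻¹ ((1 - N * M)⁻¹ * N) ((1 - M * N)⁻¹ * M) (1 - M * N)⁻¹ = 1 := by
  have h' : IsUnit (1 - M * N).det := by rwa [det_one_sub_mul_comm]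
  rw [fromBlocks_multiply, ← fromBlocks_one, sub_eq_add_neg, fromBlocks_neg, fromBlocks_add,
    fromBlocks_multiply, nonsing_inv_one_sub_mul_mul M N, nonsing_inv_one_sub_mul_mul N M]
  simp only [zero_mul, one_mul, mul_zero, add_zero, zero_add, neg_zero]
  refine fromBlocks_inj.mpr ⟨?_, ?_, ?_, ?_⟩
  · rw [← mul_assoc, neg_mul, neg_mul, ← sub_eq_add_neg, ← one_sub_mul, mul_nonsing_inv _ h]
  · rw [neg_mul, add_neg_cancel]
  · rw [neg_mul, neg_add_cancel]
  · rw [← mul_assoc, neg_mul, neg_mul, neg_add_eq_sub, ← one_sub_mul, mul_nonsing_inv _ h']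

theorem PosSemidef.fromBlocks_zero {m R : Type*} [Fintype m] [CommRing R] [PartialOrder R]
    [StarRing R] [StarOrderedRing R] {A : Matrix m m R} {D : Matrix n n R}
    (hA : A.PosSemidef) (hD : D.PosSemidef) : (fromBlocks A 0 0 D).PosSemidef := by
  refine .of_dotProduct_mulVec_nonneg (hA.1.fromBlocks (by simp) hD.1) fun x => ?_
  rw [fromBlocks_mulVec, dotProduct_block]
  simp only [zero_mulVec, add_zero, zero_add, Sum.elim_comp_inl, Sum.elim_comp_inr]
  exact add_nonneg (hA.dotProduct_mulVec_nonneg _) (hD.dotProduct_mulVec_nonneg _)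

end Matrix

/-- The closed-loop frequency response of the positive feedback interconnection of two
negative-imaginary frequency responses is negative imaginary. -/
theorem closed_loop_freq_response_ni {m : ℕ} (M N : Matrix (Fin m) (Fin m) ℂ)
    (hM : (Complex.I • (M - Mᴴ)).PosSemidef) (hN : (Complex.I • (N - Nᴴ)).PosSemidef)
    (hinv : IsUnit (1 - N * M)) :
    (Complex.I •
        ((Matrix.fromBlocks (M * (1 - N * M)⁻¹) (M * (1 - N * M)⁻¹ * N)
            (N * (1 - M * N)⁻¹ * M) (N * (1 - M * N)⁻¹)) -
          (Matrix.fromBlocks (M * (1 - N * M)⁻¹) (M * (1 - N * M)⁻¹ * N)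
            (N * (1 - M * N)⁻¹ * M) (N * (1 - M * N)⁻¹))ᴴ)).PosSemidef := by
  set G := fromBlocks M 0 0 N
  set F := fromBlocks (1 - N * M)⁻¹ ((1 - N * M)⁻¹ * N) ((1 - M * N)⁻¹ * M) (1 - M * N)⁻¹
  have hT : fromBlocks (M * (1 - N * M)⁻¹) (M * (1 - N * M)⁻¹ * N)
      (N * (1 - M * N)⁻¹ * M) (N * (1 - M * N)⁻¹) = G * F := by
    simp only [G, F, fromBlocks_multiply, zero_mul, add_zero, zero_add, mul_assoc]
  have hJ : IsSelfAdjoint (fromBlocks 0 1 1 0 : Matrix (Fin m ⊕ Fin m) (Fin m ⊕ Fin m) ℂ) := by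
    simp [IsSelfAdjoint, star_eq_conjTranspose, fromBlocks_conjTranspose]
  have hF := one_sub_fromBlocks_swap_mul_mul_fromBlocks_inv_eq_one
    ((isUnit_iff_isUnit_det _).mp hinv)
  have hD : (Complex.I • (G - Gᴴ)).PosSemidef := by
    simpa [G, fromBlocks_conjTranspose, sub_eq_add_neg, fromBlocks_neg, fromBlocks_add,
      fromBlocks_smul] using hM.fromBlocks_zero hN
  rw [hT, ← star_eq_conjTranspose, hJ.mul_sub_star_mul hF]
  simp only [star_eq_conjTranspose]
  rw [← Matrix.smul_mul, ← Matrix.mul_smul]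
  exact hD.conjTranspose_mul_mul_same F
end

section
/- Let (A₁,B₁,C₁,D₁) and (A₂,B₂,C₂,D₂) be minimal realizations of m×m transfer functions R and R_s, both negative imaginary. Assume I − D₂D₁ is invertible and that the closed-loop state matrix of the positive feedback interconnection, Ā = [[A₁ + B₁(I−D₂D₁)⁻¹D₂C₁, B₁(I−D₂D₁)⁻¹C₂], [B₂(I−D₁D₂)⁻¹C₁, A₂ + B₂(I−D₁D₂)⁻¹D₁C₂]], is Hurwitz. Then for every ω ∈ (0,∞) such that jω is an eigenvalue of neither A₁ nor A₂, the matrix I − R_s(jω)R(jω) is invertible and the 2m×2m closed-loop frequency response T(jω) = [[R(I−R_sR)⁻¹, R(I−R_sR)⁻¹R_s], [R_s(I−RR_s)⁻¹R, R_s(I−RR_s)⁻¹]] evaluated at jω satisfies j(T(jω) − T(jω)ᴴ) ⪰ 0. -/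
open Matrix Filter Topology ComplexOrder

/-!
At `s = jω` the loop is well posed: if `1 - R₂(s) R₁(s)` were singular, a loop signal fixed by
`R₂(s) R₁(s)` would yield an eigenvector of the closed-loop state matrix with the eigenvalue `s`
on the imaginary axis, contradicting the Hurwitz assumption. For the frequency response, write
`G = diag(R₁, R₂)` and let `P` swap the two blocks, so that `T = G (1 - P G)⁻¹`. As `P` is
Hermitian, `T - Tᴴ = Wᴴ (G - Gᴴ) W` with `W = (1 - P G)⁻¹`, so `j (T - Tᴴ)` is congruent to
the block diagonal matrix of the `j (Rᵢ - Rᵢᴴ) ⪰ 0`.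
-/

namespace Matrix

variable {m n R : Type*} [Fintype m] [Fintype n] [DecidableEq m] [DecidableEq n] [CommRing R]

lemma isUnit_one_sub_mul_comm {A : Matrix m n R} {B : Matrix n m R} (h : IsUnit (1 - A * B)) :
    IsUnit (1 - B * A) := by
  rwa [isUnit_iff_isUnit_det, ← det_one_sub_mul_comm, ← isUnit_iff_isUnit_det]

lemma mul_nonsing_inv_one_sub_mul {A : Matrix m n R} {B : Matrix n m R} (h : IsUnit (1 - B * A)) :
    A * (1 - B * A)⁻¹ = (1 - A * B)⁻¹ * A := by
  have h' := (isUnit_iff_isUnit_det _).mp (isUnit_one_sub_mul_comm h)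
  have h := (isUnit_iff_isUnit_det _).mp h
  have hcomm : (1 - A * B) * A = A * (1 - B * A) := by
    simp only [Matrix.sub_mul, Matrix.mul_sub, Matrix.one_mul, Matrix.mul_one, Matrix.mul_assoc]
  calc A * (1 - B * A)⁻¹ = (1 - A * B)⁻¹ * ((1 - A * B) * A) * (1 - B * A)⁻¹ := by
        rw [← Matrix.mul_assoc, nonsing_inv_mul _ h', Matrix.one_mul]
    _ = (1 - A * B)⁻¹ * A := by
        rw [hcomm, Matrix.mul_assoc, Matrix.mul_assoc, mul_nonsing_inv _ h, Matrix.mul_one]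

lemma map_nonsing_inv {S : Type*} [CommRing S] (f : R →+* S) {M : Matrix n n R} (h : IsUnit M) :
    M⁻¹.map f = (M.map f)⁻¹ := by
  refine (inv_eq_left_inv ?_).symm
  rw [← Matrix.map_mul, nonsing_inv_mul _ ((isUnit_iff_isUnit_det M).mp h),
    Matrix.map_one _ f.map_zero f.map_one]

lemma eq_nonsing_inv_mulVec_of_mulVec_eq {M : Matrix n n R} (h : IsUnit M) {u v : n → R}
    (huv : M *ᵥ u = v) : u = M⁻¹ *ᵥ v := by
  rw [← huv, mulVec_mulVec, nonsing_inv_mul _ ((isUnit_iff_isUnit_det M).mp h), one_mulVec]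

lemma mulVec_resolvent_add {A : Matrix n n R} {s : R} (h : IsUnit (s • 1 - A)) (v : n → R) :
    A *ᵥ ((s • 1 - A)⁻¹ *ᵥ v) + v = s • ((s • 1 - A)⁻¹ *ᵥ v) := by
  set x := (s • 1 - A)⁻¹ *ᵥ v
  have hx : (s • 1 - A) *ᵥ x = v := by
    rw [mulVec_mulVec, mul_nonsing_inv _ ((isUnit_iff_isUnit_det _).mp h), one_mulVec]
  rw [← hx, sub_mulVec, smul_mulVec, one_mulVec]
  abel

lemma mem_spectrum_of_mulVec_eq_smul {A : Matrix n n R} {v : n → R} {μ : R} (hv : v ≠ 0)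
    (h : A *ᵥ v = μ • v) : μ ∈ spectrum R A := by
  rw [← spectrum_toLin']
  exact Module.End.HasEigenvalue.mem_spectrum
    (Module.End.hasEigenvalue_of_hasEigenvector ⟨Module.End.mem_eigenspace_iff.mpr h, hv⟩)

end Matrix

section Feedback

variable {K n n₁ n₂ m : Type*} [Fintype n] [DecidableEq n] [Fintype m] [DecidableEq m]

noncomputable def transferMatrix [CommRing K] (A : Matrix n n K) (B : Matrix n m K)
    (C : Matrix m n K) (D : Matrix m m K) (s : K) : Matrix m m K :=
  C * (s • 1 - A)⁻¹ * B + D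

omit [DecidableEq m] in
lemma transferMatrix_mulVec [CommRing K] (A : Matrix n n K) (B : Matrix n m K)
    (C : Matrix m n K) (D : Matrix m m K) (s : K) (v : m → K) :
    transferMatrix A B C D s *ᵥ v = C *ᵥ ((s • 1 - A)⁻¹ *ᵥ (B *ᵥ v)) + D *ᵥ v := by
  simp only [transferMatrix, add_mulVec, mulVec_mulVec, Matrix.mul_assoc]

noncomputable def closedLoopStateMatrix [CommRing K]
    (A₁ : Matrix n₁ n₁ K) (B₁ : Matrix n₁ m K) (C₁ : Matrix m n₁ K) (D₁ : Matrix m m K)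
    (A₂ : Matrix n₂ n₂ K) (B₂ : Matrix n₂ m K) (C₂ : Matrix m n₂ K) (D₂ : Matrix m m K) :
    Matrix (n₁ ⊕ n₂) (n₁ ⊕ n₂) K :=
  fromBlocks (A₁ + B₁ * (1 - D₂ * D₁)⁻¹ * D₂ * C₁) (B₁ * (1 - D₂ * D₁)⁻¹ * C₂)
    (B₂ * (1 - D₁ * D₂)⁻¹ * C₁) (A₂ + B₂ * (1 - D₁ * D₂)⁻¹ * D₁ * C₂)

section CommRing

variable [CommRing K]
  {A₁ : Matrix n₁ n₁ K} {B₁ : Matrix n₁ m K} {C₁ : Matrix m n₁ K} {D₁ : Matrix m m K}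
  {A₂ : Matrix n₂ n₂ K} {B₂ : Matrix n₂ m K} {C₂ : Matrix m n₂ K} {D₂ : Matrix m m K}

lemma closedLoopStateMatrix_map {L : Type*} [CommRing L] (f : K →+* L)
    (hD : IsUnit (1 - D₂ * D₁)) :
    (closedLoopStateMatrix A₁ B₁ C₁ D₁ A₂ B₂ C₂ D₂).map f =
      closedLoopStateMatrix (A₁.map f) (B₁.map f) (C₁.map f) (D₁.map f)
        (A₂.map f) (B₂.map f) (C₂.map f) (D₂.map f) := by
  simp only [closedLoopStateMatrix, fromBlocks_map, Matrix.map_add f (map_add f), Matrix.map_mul,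
    Matrix.map_nonsing_inv f hD, Matrix.map_nonsing_inv f (Matrix.isUnit_one_sub_mul_comm hD),
    Matrix.map_sub f (map_sub f), Matrix.map_one f f.map_zero f.map_one]

lemma closedLoopStateMatrix_mulVec [Fintype n₁] [Fintype n₂] (hD : IsUnit (1 - D₂ * D₁))
    {x₁ : n₁ → K} {x₂ : n₂ → K} {u y : m → K} (hu : u = C₂ *ᵥ x₂ + D₂ *ᵥ y)
    (hy : y = C₁ *ᵥ x₁ + D₁ *ᵥ u) :
    closedLoopStateMatrix A₁ B₁ C₁ D₁ A₂ B₂ C₂ D₂ *ᵥ (x₁ ⊕ᵥ x₂) =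
      (A₁ *ᵥ x₁ + B₁ *ᵥ u) ⊕ᵥ (A₂ *ᵥ x₂ + B₂ *ᵥ y) := by
  have hu' : u = (1 - D₂ * D₁)⁻¹ *ᵥ (D₂ *ᵥ (C₁ *ᵥ x₁) + C₂ *ᵥ x₂) := by
    refine Matrix.eq_nonsing_inv_mulVec_of_mulVec_eq hD ?_
    rw [sub_mulVec, one_mulVec, ← mulVec_mulVec]
    nth_rewrite 1 [hu]
    rw [hy, mulVec_add]
    abel
  have hy' : y = (1 - D₁ * D₂)⁻¹ *ᵥ (C₁ *ᵥ x₁ + D₁ *ᵥ (C₂ *ᵥ x₂)) := by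
    refine Matrix.eq_nonsing_inv_mulVec_of_mulVec_eq (Matrix.isUnit_one_sub_mul_comm hD) ?_
    rw [sub_mulVec, one_mulVec, ← mulVec_mulVec]
    nth_rewrite 1 [hy]
    rw [hu, mulVec_add]
    abel
  rw [closedLoopStateMatrix, fromBlocks_mulVec, hu', hy']
  simp only [Sum.elim_comp_inl, Sum.elim_comp_inr, add_mulVec, mulVec_add, ← mulVec_mulVec]
  congr 1 <;> abel

end CommRing

/-- A loop signal `u` with `R₂(s) R₁(s) u = u` is carried by the open-loop state responses
`x₁ = (s - A₁)⁻¹ B₁ u`, `x₂ = (s - A₂)⁻¹ B₂ R₁(s) u`, which stack to an eigenvector of the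
closed-loop state matrix for `s`. -/
lemma mem_spectrum_closedLoopStateMatrix [Field K] [Fintype n₁] [DecidableEq n₁] [Fintype n₂]
    [DecidableEq n₂]
    {A₁ : Matrix n₁ n₁ K} {B₁ : Matrix n₁ m K} {C₁ : Matrix m n₁ K} {D₁ : Matrix m m K}
    {A₂ : Matrix n₂ n₂ K} {B₂ : Matrix n₂ m K} {C₂ : Matrix m n₂ K} {D₂ : Matrix m m K} {s : K}
    (hD : IsUnit (1 - D₂ * D₁)) (h₁ : s ∉ spectrum K A₁) (h₂ : s ∉ spectrum K A₂)
    (hR : ¬IsUnit (1 - transferMatrix A₂ B₂ C₂ D₂ s * transferMatrix A₁ B₁ C₁ D₁ s)) :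
    s ∈ spectrum K (closedLoopStateMatrix A₁ B₁ C₁ D₁ A₂ B₂ C₂ D₂) := by
  rw [spectrum.notMem_iff, Algebra.algebraMap_eq_smul_one] at h₁ h₂
  rw [isUnit_iff_isUnit_det, isUnit_iff_ne_zero, not_not, ← exists_mulVec_eq_zero_iff] at hR
  obtain ⟨u, hu0, hu⟩ := hR
  set y := transferMatrix A₁ B₁ C₁ D₁ s *ᵥ u
  set x₁ := (s • 1 - A₁)⁻¹ *ᵥ (B₁ *ᵥ u)
  set x₂ := (s • 1 - A₂)⁻¹ *ᵥ (B₂ *ᵥ y)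
  have hy : y = C₁ *ᵥ x₁ + D₁ *ᵥ u := transferMatrix_mulVec ..
  have hu' : u = C₂ *ᵥ x₂ + D₂ *ᵥ y := by
    rw [sub_mulVec, one_mulVec, sub_eq_zero, ← mulVec_mulVec] at hu
    exact hu.trans (transferMatrix_mulVec ..)
  have hx : x₁ ⊕ᵥ x₂ ≠ 0 := by
    intro hx
    have hx₁ : x₁ = 0 := funext fun i => congrFun hx (Sum.inl i)
    have hx₂ : x₂ = 0 := funext fun i => congrFun hx (Sum.inr i)
    refine hu0 (Matrix.eq_nonsing_inv_mulVec_of_mulVec_eq hD ?_ |>.trans (mulVec_zero _))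
    rw [sub_mulVec, one_mulVec, ← mulVec_mulVec, sub_eq_zero]
    nth_rewrite 1 [hu']
    rw [hy, hx₁, hx₂]
    simp
  refine Matrix.mem_spectrum_of_mulVec_eq_smul hx ?_
  rw [closedLoopStateMatrix_mulVec hD hu' hy, Matrix.mulVec_resolvent_add h₁,
    Matrix.mulVec_resolvent_add h₂]
  ext (i | i) <;> rfl

end Feedback

namespace Matrix

variable {m n : Type*} [Fintype m] [Fintype n]

lemma mul_sub_conjTranspose_mul_eq [DecidableEq n] {R : Type*} [Ring R] [StarRing R]
    {G P W : Matrix n n R} (hP : Pᴴ = P) (hW : (1 - P * G) * W = 1) :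
    G * W - (G * W)ᴴ = Wᴴ * (G - Gᴴ) * W := by
  have hW' : Wᴴ * (1 - P * G)ᴴ = 1 := by rw [← conjTranspose_mul, hW, conjTranspose_one]
  have hmid : (1 - P * G)ᴴ * G - Gᴴ * (1 - P * G) = G - Gᴴ := by
    rw [conjTranspose_sub, conjTranspose_one, conjTranspose_mul, hP]
    noncomm_ring
  calc G * W - (G * W)ᴴ
      = (Wᴴ * (1 - P * G)ᴴ) * G * W - Wᴴ * Gᴴ * ((1 - P * G) * W) := by
        rw [hW, hW', conjTranspose_mul, Matrix.one_mul, Matrix.mul_one]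
    _ = Wᴴ * ((1 - P * G)ᴴ * G - Gᴴ * (1 - P * G)) * W := by noncomm_ring
    _ = Wᴴ * (G - Gᴴ) * W := by rw [hmid]

lemma PosSemidef.fromBlocks_diagonal {R : Type*} [CommRing R] [PartialOrder R] [StarRing R]
    [StarOrderedRing R] {A : Matrix m m R} {D : Matrix n n R} (hA : A.PosSemidef)
    (hD : D.PosSemidef) : (fromBlocks A 0 0 D).PosSemidef := by
  refine posSemidef_iff_dotProduct_mulVec.mpr ⟨hA.1.fromBlocks (by simp) hD.1, fun x => ?_⟩
  rw [← Sum.elim_comp_inl_inr x, fromBlocks_mulVec]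
  simp only [Function.star_sumElim, zero_mulVec, add_zero, zero_add, sumElim_dotProduct_sumElim,
    Sum.elim_comp_inl, Sum.elim_comp_inr]
  exact add_nonneg (hA.dotProduct_mulVec_nonneg _) (hD.dotProduct_mulVec_nonneg _)

end Matrix

section ClosedLoopTransfer

variable {m : Type*} [Fintype m] [DecidableEq m]

noncomputable def closedLoopTransfer {K : Type*} [CommRing K] (R₁ R₂ : Matrix m m K) :
    Matrix (m ⊕ m) (m ⊕ m) K :=
  fromBlocks (R₁ * (1 - R₂ * R₁)⁻¹) (R₁ * (1 - R₂ * R₁)⁻¹ * R₂)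
    (R₂ * (1 - R₁ * R₂)⁻¹ * R₁) (R₂ * (1 - R₁ * R₂)⁻¹)

/-- The witness is the block inverse of `1 - P G`, computed with the push-through identity
`R₁ (1 - R₂ R₁)⁻¹ = (1 - R₁ R₂)⁻¹ R₁`. -/
lemma exists_closedLoopTransfer_eq_mul {K : Type*} [CommRing K] {R₁ R₂ : Matrix m m K}
    (hR : IsUnit (1 - R₂ * R₁)) :
    ∃ W, (1 - fromBlocks 0 1 1 0 * fromBlocks R₁ 0 0 R₂) * W = 1 ∧
      closedLoopTransfer R₁ R₂ = fromBlocks R₁ 0 0 R₂ * W := by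
  have hR' := Matrix.isUnit_one_sub_mul_comm hR
  have swap₁ := Matrix.mul_nonsing_inv_one_sub_mul hR
  have swap₂ := Matrix.mul_nonsing_inv_one_sub_mul hR'
  refine ⟨fromBlocks (1 - R₂ * R₁)⁻¹ ((1 - R₂ * R₁)⁻¹ * R₂) ((1 - R₁ * R₂)⁻¹ * R₁)
    (1 - R₁ * R₂)⁻¹, ?_, ?_⟩
  · have hM := Matrix.nonsing_inv_mul _ ((isUnit_iff_isUnit_det _).mp hR)
    have hN := Matrix.nonsing_inv_mul _ ((isUnit_iff_isUnit_det _).mp hR')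
    rw [Matrix.mul_sub, Matrix.mul_one] at hM hN
    have hloop : 1 - fromBlocks 0 1 1 0 * fromBlocks R₁ 0 0 R₂ =
        (fromBlocks 1 (-R₂) (-R₁) 1 : Matrix (m ⊕ m) (m ⊕ m) K) := by
      simp [fromBlocks_multiply, ← fromBlocks_one, sub_eq_add_neg, fromBlocks_neg, fromBlocks_add]
    rw [hloop, fromBlocks_multiply, ← fromBlocks_one]
    simp only [Matrix.one_mul, Matrix.neg_mul, ← Matrix.mul_assoc, swap₁, swap₂]
    rw [Matrix.mul_assoc, ← sub_eq_add_neg, hM, Matrix.mul_assoc _ R₁,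
      neg_add_eq_sub (_ * (R₁ * R₂)), hN]
    simp
  · rw [closedLoopTransfer, fromBlocks_multiply]
    simp only [Matrix.zero_mul, add_zero, zero_add, Matrix.mul_assoc]

open Complex in
theorem posSemidef_I_smul_closedLoopTransfer_sub_conjTranspose {R₁ R₂ : Matrix m m ℂ}
    (hR : IsUnit (1 - R₂ * R₁)) (h₁ : (I • (R₁ - R₁ᴴ)).PosSemidef)
    (h₂ : (I • (R₂ - R₂ᴴ)).PosSemidef) :
    (I • (closedLoopTransfer R₁ R₂ - (closedLoopTransfer R₁ R₂)ᴴ)).PosSemidef := by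
  obtain ⟨W, hW, hT⟩ := exists_closedLoopTransfer_eq_mul hR
  have hP : (fromBlocks 0 1 1 0 : Matrix (m ⊕ m) (m ⊕ m) ℂ)ᴴ = fromBlocks 0 1 1 0 := by
    simp [fromBlocks_conjTranspose]
  have hG : I • (fromBlocks R₁ 0 0 R₂ - (fromBlocks R₁ 0 0 R₂)ᴴ) =
      fromBlocks (I • (R₁ - R₁ᴴ)) 0 0 (I • (R₂ - R₂ᴴ)) := by
    simp [fromBlocks_conjTranspose, sub_eq_add_neg, fromBlocks_neg, fromBlocks_add,
      fromBlocks_smul]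
  rw [hT, Matrix.mul_sub_conjTranspose_mul_eq hP hW, ← smul_mul_assoc, ← mul_smul_comm, hG]
  exact (h₁.fromBlocks_diagonal h₂).conjTranspose_mul_mul_same W

end ClosedLoopTransfer

theorem closed_loop_of_ni_interconnection_is_ni_general {n₁ n₂ m : ℕ}
    (A₁ : Matrix (Fin n₁) (Fin n₁) ℝ) (B₁ : Matrix (Fin n₁) (Fin m) ℝ)
    (C₁ : Matrix (Fin m) (Fin n₁) ℝ) (D₁ : Matrix (Fin m) (Fin m) ℝ)
    (A₂ : Matrix (Fin n₂) (Fin n₂) ℝ) (B₂ : Matrix (Fin n₂) (Fin m) ℝ)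
    (C₂ : Matrix (Fin m) (Fin n₂) ℝ) (D₂ : Matrix (Fin m) (Fin m) ℝ)
    (hNI₁ : IsNI A₁ B₁ C₁ D₁) (hNI₂ : IsNI A₂ B₂ C₂ D₂)
    (hD : IsUnit (1 - D₂ * D₁))
    (hA : IsHurwitz (Matrix.fromBlocks
      (A₁ + B₁ * (1 - D₂ * D₁)⁻¹ * D₂ * C₁) (B₁ * (1 - D₂ * D₁)⁻¹ * C₂)
      (B₂ * (1 - D₁ * D₂)⁻¹ * C₁) (A₂ + B₂ * (1 - D₁ * D₂)⁻¹ * D₁ * C₂))) :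
    ∀ ω : ℝ, 0 < ω → (Complex.I * ω) ∉ eigs A₁ → (Complex.I * ω) ∉ eigs A₂ →
      IsUnit (1 - tf A₂ B₂ C₂ D₂ (Complex.I * ω) * tf A₁ B₁ C₁ D₁ (Complex.I * ω)) ∧
      (Complex.I •
        ((Matrix.fromBlocks
            (tf A₁ B₁ C₁ D₁ (Complex.I * ω) *
              (1 - tf A₂ B₂ C₂ D₂ (Complex.I * ω) * tf A₁ B₁ C₁ D₁ (Complex.I * ω))⁻¹)
            (tf A₁ B₁ C₁ D₁ (Complex.I * ω) *
              (1 - tf A₂ B₂ C₂ D₂ (Complex.I * ω) * tf A₁ B₁ C₁ D₁ (Complex.I * ω))⁻¹ *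
              tf A₂ B₂ C₂ D₂ (Complex.I * ω))
            (tf A₂ B₂ C₂ D₂ (Complex.I * ω) *
              (1 - tf A₁ B₁ C₁ D₁ (Complex.I * ω) * tf A₂ B₂ C₂ D₂ (Complex.I * ω))⁻¹ *
              tf A₁ B₁ C₁ D₁ (Complex.I * ω))
            (tf A₂ B₂ C₂ D₂ (Complex.I * ω) *
              (1 - tf A₁ B₁ C₁ D₁ (Complex.I * ω) * tf A₂ B₂ C₂ D₂ (Complex.I * ω))⁻¹)) -
          (Matrix.fromBlocks
            (tf A₁ B₁ C₁ D₁ (Complex.I * ω) *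
              (1 - tf A₂ B₂ C₂ D₂ (Complex.I * ω) * tf A₁ B₁ C₁ D₁ (Complex.I * ω))⁻¹)
            (tf A₁ B₁ C₁ D₁ (Complex.I * ω) *
              (1 - tf A₂ B₂ C₂ D₂ (Complex.I * ω) * tf A₁ B₁ C₁ D₁ (Complex.I * ω))⁻¹ *
              tf A₂ B₂ C₂ D₂ (Complex.I * ω))
            (tf A₂ B₂ C₂ D₂ (Complex.I * ω) *
              (1 - tf A₁ B₁ C₁ D₁ (Complex.I * ω) * tf A₂ B₂ C₂ D₂ (Complex.I * ω))⁻¹ *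
              tf A₁ B₁ C₁ D₁ (Complex.I * ω))
            (tf A₂ B₂ C₂ D₂ (Complex.I * ω) *
              (1 - tf A₁ B₁ C₁ D₁ (Complex.I * ω) * tf A₂ B₂ C₂ D₂ (Complex.I * ω))⁻¹))ᴴ)).PosSemidef := by
  intro ω hω h₁ h₂
  have hR : IsUnit (1 - tf A₂ B₂ C₂ D₂ (Complex.I * ω) * tf A₁ B₁ C₁ D₁ (Complex.I * ω)) := by
    by_contra hR
    have hmem : Complex.I * ω ∈ eigs (closedLoopStateMatrix A₁ B₁ C₁ D₁ A₂ B₂ C₂ D₂) := by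
      have hDℂ : IsUnit (1 - D₂.map Complex.ofRealHom * D₁.map Complex.ofRealHom) := by
        simpa only [map_sub, map_one, map_mul, RingHom.mapMatrix_apply]
          using hD.map Complex.ofRealHom.mapMatrix
      rw [eigs, show Complex.ofReal = ⇑Complex.ofRealHom from rfl,
        closedLoopStateMatrix_map _ hD]
      exact mem_spectrum_closedLoopStateMatrix hDℂ h₁ h₂ hR
    simpa using hA _ hmem
  exact ⟨hR, posSemidef_I_smul_closedLoopTransfer_sub_conjTranspose hR
    (hNI₁.2.1 ω hω h₁) (hNI₂.2.1 ω hω h₂)⟩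

/-- Lemma: the closed-loop transfer function of an internally stable positive feedback
interconnection of two NI systems is NI. -/
theorem closed_loop_of_ni_interconnection_is_ni {n₁ n₂ m : ℕ}
    (A₁ : Matrix (Fin n₁) (Fin n₁) ℝ) (B₁ : Matrix (Fin n₁) (Fin m) ℝ)
    (C₁ : Matrix (Fin m) (Fin n₁) ℝ) (D₁ : Matrix (Fin m) (Fin m) ℝ)
    (A₂ : Matrix (Fin n₂) (Fin n₂) ℝ) (B₂ : Matrix (Fin n₂) (Fin m) ℝ)
    (C₂ : Matrix (Fin m) (Fin n₂) ℝ) (D₂ : Matrix (Fin m) (Fin m) ℝ)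
    (hmin₁ : IsMinimal A₁ B₁ C₁) (hmin₂ : IsMinimal A₂ B₂ C₂)
    (hNI₁ : IsNI A₁ B₁ C₁ D₁) (hNI₂ : IsNI A₂ B₂ C₂ D₂)
    (hD : IsUnit (1 - D₂ * D₁))
    (hA : IsHurwitz (Matrix.fromBlocks
      (A₁ + B₁ * (1 - D₂ * D₁)⁻¹ * D₂ * C₁) (B₁ * (1 - D₂ * D₁)⁻¹ * C₂)
      (B₂ * (1 - D₁ * D₂)⁻¹ * C₁) (A₂ + B₂ * (1 - D₁ * D₂)⁻¹ * D₁ * C₂))) :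
    ∀ ω : ℝ, 0 < ω → (Complex.I * ω) ∉ eigs A₁ → (Complex.I * ω) ∉ eigs A₂ →
      IsUnit (1 - tf A₂ B₂ C₂ D₂ (Complex.I * ω) * tf A₁ B₁ C₁ D₁ (Complex.I * ω)) ∧
      (Complex.I •
        ((Matrix.fromBlocks
            (tf A₁ B₁ C₁ D₁ (Complex.I * ω) *
              (1 - tf A₂ B₂ C₂ D₂ (Complex.I * ω) * tf A₁ B₁ C₁ D₁ (Complex.I * ω))⁻¹)
            (tf A₁ B₁ C₁ D₁ (Complex.I * ω) *
              (1 - tf A₂ B₂ C₂ D₂ (Complex.I * ω) * tf A₁ B₁ C₁ D₁ (Complex.I * ω))⁻¹ *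
              tf A₂ B₂ C₂ D₂ (Complex.I * ω))
            (tf A₂ B₂ C₂ D₂ (Complex.I * ω) *
              (1 - tf A₁ B₁ C₁ D₁ (Complex.I * ω) * tf A₂ B₂ C₂ D₂ (Complex.I * ω))⁻¹ *
              tf A₁ B₁ C₁ D₁ (Complex.I * ω))
            (tf A₂ B₂ C₂ D₂ (Complex.I * ω) *
              (1 - tf A₁ B₁ C₁ D₁ (Complex.I * ω) * tf A₂ B₂ C₂ D₂ (Complex.I * ω))⁻¹)) -
          (Matrix.fromBlocks
            (tf A₁ B₁ C₁ D₁ (Complex.I * ω) *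
              (1 - tf A₂ B₂ C₂ D₂ (Complex.I * ω) * tf A₁ B₁ C₁ D₁ (Complex.I * ω))⁻¹)
            (tf A₁ B₁ C₁ D₁ (Complex.I * ω) *
              (1 - tf A₂ B₂ C₂ D₂ (Complex.I * ω) * tf A₁ B₁ C₁ D₁ (Complex.I * ω))⁻¹ *
              tf A₂ B₂ C₂ D₂ (Complex.I * ω))
            (tf A₂ B₂ C₂ D₂ (Complex.I * ω) *
              (1 - tf A₁ B₁ C₁ D₁ (Complex.I * ω) * tf A₂ B₂ C₂ D₂ (Complex.I * ω))⁻¹ *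
              tf A₁ B₁ C₁ D₁ (Complex.I * ω))
            (tf A₂ B₂ C₂ D₂ (Complex.I * ω) *
              (1 - tf A₁ B₁ C₁ D₁ (Complex.I * ω) * tf A₂ B₂ C₂ D₂ (Complex.I * ω))⁻¹))ᴴ)).PosSemidef :=
  closed_loop_of_ni_interconnection_is_ni_general A₁ B₁ C₁ D₁ A₂ B₂ C₂ D₂ hNI₁ hNI₂ hD hA
end

section
/- Let A ∈ ℝ^{n×n}, B ∈ ℝ^{n×m}, C ∈ ℝ^{m×n}, D ∈ ℝ^{m×m} with D = Dᵀ, and suppose there exists a real symmetric matrix P ⪰ 0 such that the (n+m)×(n+m) real symmetric block matrix [[PA + AᵀP, PB − AᵀCᵀ], [BᵀP − CA, −(CB + BᵀCᵀ)]] is negative semidefinite. Then the transfer function R(s) = C(sI − A)⁻¹B + D satisfies j(R(jω) − R(jω)ᴴ) ⪰ 0 for every ω ∈ (0,∞) such that jω is not an eigenvalue of A. -/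
open Matrix Filter Topology ComplexOrder

/-!
Write `s = jω` and `G = (sI - A)⁻¹B`, so that `AG = sG - B` and `R(s) = CG + D`. Compressing the
LMI matrix `M` by `X = [G; I]` cancels every term containing `P`, because `s̄ = -s`, and leaves
`Xᴴ M X = s (GᴴCᵀ - CG) = -jω (R(s) - R(s)ᴴ)` once `D = Dᵀ`. Hence
`j (R(s) - R(s)ᴴ) = ω⁻¹ Xᴴ (-M) X ⪰ 0`.
-/

namespace Matrix

variable {R n m : Type*} [Fintype n]

/-- The LMI of the negative imaginary lemma reads `niLMIMatrix P A B C ⪯ 0`. -/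
def niLMIMatrix [Ring R] [StarRing R] (P A : Matrix n n R) (B : Matrix n m R)
    (C : Matrix m n R) : Matrix (n ⊕ m) (n ⊕ m) R :=
  fromBlocks (P * A + Aᴴ * P) (P * B - Aᴴ * Cᴴ) (Bᴴ * P - C * A) (-(C * B + Bᴴ * Cᴴ))

theorem fromCols_mul_niLMIMatrix_mul_fromRows [CommRing R] [StarRing R]
    [Fintype m] [DecidableEq m] {P A : Matrix n n R} {B G : Matrix n m R} {C : Matrix m n R}
    {s : R} (hs : star s = -s) (hG : A * G = s • G - B) :
    fromCols Gᴴ (1 : Matrix m m R) * niLMIMatrix P A B C * fromRows G (1 : Matrix m m R) =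
      s • (Gᴴ * Cᴴ - C * G) := by
  have hGA : Gᴴ * Aᴴ = -(s • Gᴴ) - Bᴴ := by
    rw [← conjTranspose_mul, hG, conjTranspose_sub, conjTranspose_smul, hs, neg_smul]
  rw [niLMIMatrix, Matrix.mul_assoc, fromBlocks_mul_fromRows, fromCols_mul_fromRows]
  simp only [Matrix.one_mul, Matrix.mul_one, Matrix.mul_add, Matrix.add_mul, Matrix.mul_sub,
    Matrix.sub_mul, ← Matrix.mul_assoc, hGA]
  simp only [Matrix.mul_assoc, hG, Matrix.mul_sub, Matrix.neg_mul, Matrix.mul_smul,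
    Matrix.smul_mul, smul_sub]
  abel

theorem mul_inv_smul_one_sub_mul [CommRing R] [DecidableEq n] {A : Matrix n n R} {s : R}
    (hs : IsUnit (s • 1 - A).det) (B : Matrix n m R) :
    A * ((s • 1 - A)⁻¹ * B) = s • ((s • 1 - A)⁻¹ * B) - B := by
  have hB : (s • 1 - A) * ((s • 1 - A)⁻¹ * B) = B := by
    rw [← Matrix.mul_assoc, mul_nonsing_inv _ hs, Matrix.one_mul]
  calc A * ((s • 1 - A)⁻¹ * B)
      = s • ((s • 1 - A)⁻¹ * B) - (s • 1 - A) * ((s • 1 - A)⁻¹ * B) := by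
        rw [Matrix.sub_mul, Matrix.smul_mul, Matrix.one_mul]; abel
    _ = s • ((s • 1 - A)⁻¹ * B) - B := by rw [hB]

theorem map_ofReal_mul {l k : Type*} (M : Matrix l n ℝ) (N : Matrix n k ℝ) :
    (M * N).map Complex.ofReal = M.map Complex.ofReal * N.map Complex.ofReal :=
  Matrix.map_mul (f := Complex.ofRealHom)

omit [Fintype n] in
theorem conjTranspose_map_ofReal {l : Type*} (M : Matrix l n ℝ) :
    (M.map Complex.ofReal)ᴴ = Mᵀ.map Complex.ofReal := by
  ext i j
  simp

theorem PosSemidef.map_ofReal {M : Matrix n n ℝ} (hM : M.PosSemidef) :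
    (M.map Complex.ofReal).PosSemidef := by
  obtain ⟨r, v, rfl⟩ := posSemidef_iff_eq_sum_vecMulVec.mp hM
  refine posSemidef_iff_eq_sum_vecMulVec.mpr ⟨r, fun i a => (v i a : ℂ), ?_⟩
  ext a b
  simp [sum_apply, vecMulVec_apply]

theorem niLMIMatrix_map_ofReal (P A : Matrix n n ℝ) (B : Matrix n m ℝ) (C : Matrix m n ℝ) :
    (niLMIMatrix P A B C).map Complex.ofReal =
      niLMIMatrix (P.map Complex.ofReal) (A.map Complex.ofReal) (B.map Complex.ofReal)
        (C.map Complex.ofReal) := by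
  simp only [niLMIMatrix, fromBlocks_map, conjTranspose_map_ofReal,
    map_ofReal_mul, Matrix.map_add _ Complex.ofReal_add,
    Matrix.map_sub _ Complex.ofReal_sub, Matrix.map_neg _ Complex.ofReal_neg,
    conjTranspose_eq_transpose_of_trivial]

end Matrix

theorem tf_sub_conjTranspose_tf {n m : ℕ} (A : Matrix (Fin n) (Fin n) ℝ)
    (B : Matrix (Fin n) (Fin m) ℝ) (C : Matrix (Fin m) (Fin n) ℝ) {D : Matrix (Fin m) (Fin m) ℝ}
    (hD : D = Dᵀ) (s : ℂ) :
    tf A B C D s - (tf A B C D s)ᴴ =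
      C.map Complex.ofReal * ((s • 1 - A.map Complex.ofReal)⁻¹ * B.map Complex.ofReal) -
        ((s • 1 - A.map Complex.ofReal)⁻¹ * B.map Complex.ofReal)ᴴ * (C.map Complex.ofReal)ᴴ := by
  rw [tf, Matrix.mul_assoc, conjTranspose_add, conjTranspose_mul, conjTranspose_map_ofReal D,
    ← hD]
  abel

theorem modified_ni_lemma_lmi_sufficiency_general {n m : ℕ}
    (A : Matrix (Fin n) (Fin n) ℝ) (B : Matrix (Fin n) (Fin m) ℝ)
    (C : Matrix (Fin m) (Fin n) ℝ) (D : Matrix (Fin m) (Fin m) ℝ)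
    (hD : D = Dᵀ) (P : Matrix (Fin n) (Fin n) ℝ)
    (hLMI : (-(Matrix.fromBlocks (P * A + Aᵀ * P) (P * B - Aᵀ * Cᵀ)
        (Bᵀ * P - C * A) (-(C * B + Bᵀ * Cᵀ)))).PosSemidef) :
    ∀ ω : ℝ, 0 < ω → (Complex.I * ω) ∉ eigs A →
      (Complex.I • (tf A B C D (Complex.I * ω) - (tf A B C D (Complex.I * ω))ᴴ)).PosSemidef := by
  intro ω hω hjω
  set s : ℂ := Complex.I * ω
  have hs : star s = -s := by simp [s, Complex.conj_ofReal]
  have hdet : IsUnit (s • 1 - A.map Complex.ofReal).det := by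
    rw [← isUnit_iff_isUnit_det, ← Algebra.algebraMap_eq_smul_one]
    simpa [eigs, spectrum.mem_iff] using hjω
  obtain ⟨G, hG⟩ : ∃ G, (s • 1 - A.map Complex.ofReal)⁻¹ * B.map Complex.ofReal = G := ⟨_, rfl⟩
  have hAG := mul_inv_smul_one_sub_mul hdet (B.map Complex.ofReal)
  rw [hG] at hAG
  have hM : (-niLMIMatrix (P.map Complex.ofReal) (A.map Complex.ofReal) (B.map Complex.ofReal)
      (C.map Complex.ofReal)).PosSemidef := by
    rw [← niLMIMatrix_map_ofReal, ← Matrix.map_neg _ Complex.ofReal_neg]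
    exact PosSemidef.map_ofReal (by simpa [niLMIMatrix] using hLMI)
  have hX := hM.conjTranspose_mul_mul_same (fromRows G 1)
  rw [conjTranspose_fromRows_eq_fromCols_conjTranspose, conjTranspose_one, Matrix.mul_neg,
    Matrix.neg_mul, fromCols_mul_niLMIMatrix_mul_fromRows hs hAG] at hX
  convert hX.smul (inv_nonneg.mpr hω.le) using 1
  rw [tf_sub_conjTranspose_tf A B C hD, hG, ← neg_sub, smul_neg, smul_neg, ← smul_assoc]
  congr 2
  simp only [s, Complex.real_smul, Complex.ofReal_inv]
  field_simp

/-- Sufficiency direction of the modified Negative Imaginary Lemma (LMI form). -/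
theorem modified_ni_lemma_lmi_sufficiency {n m : ℕ}
    (A : Matrix (Fin n) (Fin n) ℝ) (B : Matrix (Fin n) (Fin m) ℝ)
    (C : Matrix (Fin m) (Fin n) ℝ) (D : Matrix (Fin m) (Fin m) ℝ)
    (hD : D = Dᵀ) (P : Matrix (Fin n) (Fin n) ℝ) (hP : P.PosSemidef)
    (hLMI : (-(Matrix.fromBlocks (P * A + Aᵀ * P) (P * B - Aᵀ * Cᵀ)
        (Bᵀ * P - C * A) (-(C * B + Bᵀ * Cᵀ)))).PosSemidef) :
    ∀ ω : ℝ, 0 < ω → (Complex.I * ω) ∉ eigs A →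
      (Complex.I • (tf A B C D (Complex.I * ω) - (tf A B C D (Complex.I * ω))ᴴ)).PosSemidef :=
  modified_ni_lemma_lmi_sufficiency_general A B C D hD P hLMI
end

section
/- Let M ≥ 1 and for i = 1,…,M let k_i > 0, ζ_i > 0, ω_i > 0 be real numbers. Define the SISO resonant controller C(s) = Σ_{i=1}^M (−k_i s²)/(s² + 2ζ_iω_i s + ω_i²). Then C is strictly negative imaginary: every root of every polynomial s² + 2ζ_iω_i s + ω_i² has negative real part (so C has no poles in the closed right half-plane), and Im C(jω) < 0, equivalently j(C(jω) − conj(C(jω))) > 0, for every ω ∈ (0,∞). -/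
open Matrix Filter Topology ComplexOrder

lemma sni_term_im_neg (kk zz ww w : ℝ) (hk : 0 < kk) (hz : 0 < zz) (hww : 0 < ww) (hw : 0 < w) :
    ((-(kk : ℂ) * (Complex.I * w) ^ 2) /
          ((Complex.I * w) ^ 2 + 2 * (zz : ℂ) * (ww : ℂ) * (Complex.I * w) +
            (ww : ℂ) ^ 2)).im < 0 := by
  rw [Complex.div_im]
  simp only [Complex.add_re, Complex.add_im, Complex.mul_re, Complex.mul_im,
    Complex.ofReal_re, Complex.ofReal_im, Complex.I_re, Complex.I_im, pow_two,
    Complex.neg_re, Complex.neg_im, Complex.re_ofNat, Complex.im_ofNat]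
  ring_nf
  rw [neg_lt_zero]
  have hd : (Complex.I * ↑w * ↑zz * ↑ww * 2 + Complex.I ^ 2 * ↑w ^ 2 + ↑ww ^ 2) ≠ 0 := by
    intro h
    apply_fun Complex.im at h
    simp [pow_two, Complex.mul_im, Complex.add_im] at h
    rcases h with (h|h)|h <;> linarith
  have h1 : 0 < Complex.normSq (Complex.I * ↑w * ↑zz * ↑ww * 2 + Complex.I ^ 2 * ↑w ^ 2 + ↑ww ^ 2) :=
    Complex.normSq_pos.mpr hd
  have h2 : 0 < (Complex.normSq (Complex.I * ↑w * ↑zz * ↑ww * 2 + Complex.I ^ 2 * ↑w ^ 2 + ↑ww ^ 2))⁻¹ :=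
    inv_pos.mpr h1
  nlinarith [mul_pos (mul_pos (mul_pos (mul_pos (pow_pos hw 3) hk) hz) hww) h2]

/-- Resonant controllers are strictly negative imaginary. -/
theorem resonant_controller_sni (M : ℕ) (hM : 1 ≤ M) (k ζ ω : Fin M → ℝ)
    (hk : ∀ i, 0 < k i) (hζ : ∀ i, 0 < ζ i) (hω : ∀ i, 0 < ω i) :
    (∀ i, ∀ z : ℂ, z ^ 2 + 2 * (ζ i : ℂ) * (ω i : ℂ) * z + (ω i : ℂ) ^ 2 = 0 → z.re < 0) ∧
    (∀ w : ℝ, 0 < w →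
      (∑ i, (-(k i : ℂ) * (Complex.I * w) ^ 2) /
          ((Complex.I * w) ^ 2 + 2 * (ζ i : ℂ) * (ω i : ℂ) * (Complex.I * w) +
            (ω i : ℂ) ^ 2)).im < 0 ∧
      0 < Complex.I *
        ((∑ i, (-(k i : ℂ) * (Complex.I * w) ^ 2) /
            ((Complex.I * w) ^ 2 + 2 * (ζ i : ℂ) * (ω i : ℂ) * (Complex.I * w) +
              (ω i : ℂ) ^ 2)) -
          (starRingEnd ℂ) (∑ i, (-(k i : ℂ) * (Complex.I * w) ^ 2) /
            ((Complex.I * w) ^ 2 + 2 * (ζ i : ℂ) * (ω i : ℂ) * (Complex.I * w) +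
              (ω i : ℂ) ^ 2)))) := by
  constructor
  · intro i z hz
    have hzi := hζ i
    have hwi := hω i
    rw [Complex.ext_iff] at hz
    simp only [Complex.add_re, Complex.add_im, Complex.mul_re, Complex.mul_im,
      Complex.ofReal_re, Complex.ofReal_im, Complex.zero_re, Complex.zero_im, pow_two,
      Complex.re_ofNat, Complex.im_ofNat] at hz
    obtain ⟨h1, h2⟩ := hz
    by_contra h
    push_neg at h
    have key : z.im * (2 * (z.re + ζ i * ω i)) = 0 := by nlinarith [h2]
    have him : z.im = 0 := by
      rcases mul_eq_zero.mp key with h' | h'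
      · exact h'
      · nlinarith
    rw [him] at h1
    ring_nf at h1
    nlinarith [sq_nonneg z.re, mul_pos hzi hwi, mul_nonneg (mul_nonneg hzi.le hwi.le) h]
  · intro w hw
    have him : (∑ i, (-(k i : ℂ) * (Complex.I * w) ^ 2) /
          ((Complex.I * w) ^ 2 + 2 * (ζ i : ℂ) * (ω i : ℂ) * (Complex.I * w) +
            (ω i : ℂ) ^ 2)).im < 0 := by
      rw [Complex.im_sum]
      apply Finset.sum_neg
      · intro i _
        exact sni_term_im_neg (k i) (ζ i) (ω i) w (hk i) (hζ i) (hω i) hw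
      · exact Finset.univ_nonempty_iff.mpr (Fin.pos_iff_nonempty.mp hM)
    refine ⟨him, ?_⟩
    set z := (∑ i, (-(k i : ℂ) * (Complex.I * w) ^ 2) /
          ((Complex.I * w) ^ 2 + 2 * (ζ i : ℂ) * (ω i : ℂ) * (Complex.I * w) +
            (ω i : ℂ) ^ 2)) with hzdef
    have key : Complex.I * (z - (starRingEnd ℂ) z) = ((-2 * z.im : ℝ) : ℂ) := by
      apply Complex.ext <;>
        simp [Complex.mul_re, Complex.mul_im, Complex.sub_re, Complex.sub_im,
          Complex.conj_re, Complex.conj_im] <;> ring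
    rw [key, Complex.zero_lt_real]
    linarith
end

section
/- Let Γ, Φ ∈ ℝ^{m×m} be symmetric positive definite matrices and define the integral resonant controller C(s) = (sI + ΓΦ)⁻¹Γ. Then every eigenvalue of −ΓΦ has negative real part (so C(s) is defined and has no poles in the closed right half-plane), and j(C(jω) − C(jω)ᴴ) ≻ 0 for every ω ∈ (0,∞); that is, C is strictly negative imaginary. -/
/-!
If `ΓΦ v = μ v` with `v ≠ 0`, then `(Φv)ᴴ Γ (Φv) = μ · vᴴ Φ v` exhibits `μ` as a quotient of two
positive numbers, so the spectrum of `ΓΦ` is positive; in particular `jωI + ΓΦ` is invertible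
for `ω ≠ 0`. Writing `M = jωI + ΓΦ`, one has `M⁻¹Γ − ΓM⁻ᴴ = M⁻¹(ΓMᴴ − MΓ)M⁻ᴴ = −2jω · M⁻¹ΓM⁻ᴴ`,
so `j(C(jω) − C(jω)ᴴ) = 2ω · M⁻¹ΓM⁻ᴴ`, a congruence of `Γ`.
-/

open Matrix Filter Topology ComplexOrder

namespace Matrix

variable {n : Type*} [Fintype n]

open MatrixOrder in
theorem PosDef.map_ofReal [DecidableEq n] {A : Matrix n n ℝ} (hA : A.PosDef) :
    (A.map Complex.ofReal).PosDef := by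
  obtain ⟨B, hB, rfl⟩ :=
    CStarAlgebra.isStrictlyPositive_iff_eq_star_mul_self.mp hA.isStrictlyPositive
  have hmap : (star B * B).map Complex.ofReal =
      star (B.map Complex.ofReal) * 1 * B.map Complex.ofReal := by
    rw [mul_one, star_eq_conjTranspose, star_eq_conjTranspose,
      ← conjTranspose_map _ fun x => (Complex.conj_ofReal x).symm]
    exact Matrix.map_mul (f := Complex.ofRealHom)
  have hB' : IsUnit (B.map Complex.ofReal) := hB.map Complex.ofRealHom.mapMatrix
  rw [hmap, hB'.posDef_star_left_conjugate_iff]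
  exact PosDef.one

theorem PosDef.pos_of_mul_mulVec_eq_smul {𝕜 : Type*} [RCLike 𝕜] {Γ Φ : Matrix n n 𝕜}
    (hΓ : Γ.PosDef) (hΦ : Φ.PosDef) {μ : 𝕜} {v : n → 𝕜} (hv : v ≠ 0)
    (h : (Γ * Φ) *ᵥ v = μ • v) : 0 < μ := by
  classical
  have hΦv : Φ *ᵥ v ≠ 0 := fun h0 =>
    hv (mulVec_injective_of_isUnit hΦ.isUnit (by rw [h0, mulVec_zero]))
  have hab : star (Φ *ᵥ v) ⬝ᵥ (Γ *ᵥ (Φ *ᵥ v)) = μ * (star v ⬝ᵥ (Φ *ᵥ v)) := by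
    rw [mulVec_mulVec, h, dotProduct_smul, smul_eq_mul, star_mulVec, hΦ.1.eq, ← dotProduct_mulVec]
  have hb := hΓ.dotProduct_mulVec_pos hΦv
  rw [hab] at hb
  exact (pos_iff_pos_of_mul_pos hb).mpr (hΦ.dotProduct_mulVec_pos hv)

theorem PosDef.pos_of_mem_spectrum_mul [DecidableEq n] {𝕜 : Type*} [RCLike 𝕜]
    {Γ Φ : Matrix n n 𝕜} (hΓ : Γ.PosDef) (hΦ : Φ.PosDef) {μ : 𝕜}
    (hμ : μ ∈ spectrum 𝕜 (Γ * Φ)) : 0 < μ := by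
  rw [← spectrum_toLin', ← Module.End.hasEigenvalue_iff_mem_spectrum] at hμ
  obtain ⟨v, hv⟩ := hμ.exists_hasEigenvector
  exact hΓ.pos_of_mul_mulVec_eq_smul hΦ hv.2 (by simpa using hv.apply_eq_smul)

theorem nonsing_inv_mul_sub_conjTranspose [DecidableEq n] {R : Type*} [CommRing R]
    [StarRing R] {M G : Matrix n n R} (hM : IsUnit M) (hG : G.IsHermitian) :
    M⁻¹ * G - (M⁻¹ * G)ᴴ = M⁻¹ * (G * Mᴴ - M * G) * (M⁻¹)ᴴ := by
  have hMH : IsUnit Mᴴ := by simpa [← star_eq_conjTranspose] using hM.star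
  rw [conjTranspose_mul, hG.eq, conjTranspose_nonsing_inv, Matrix.mul_sub, Matrix.sub_mul,
    ← mul_assoc, mul_assoc (M⁻¹ * G), mul_nonsing_inv _ ((isUnit_iff_isUnit_det _).mp hMH),
    ← mul_assoc, nonsing_inv_mul _ ((isUnit_iff_isUnit_det _).mp hM), one_mul, mul_one]

theorem IsHermitian.mul_conjTranspose_sub_mul [DecidableEq n] {R : Type*} [CommRing R]
    [StarRing R] {G P : Matrix n n R} (hG : G.IsHermitian) (hP : P.IsHermitian) (c : R) :
    G * (c • 1 + G * P)ᴴ - (c • 1 + G * P) * G = (star c - c) • G := by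
  rw [conjTranspose_add, conjTranspose_smul, conjTranspose_one, conjTranspose_mul, hG.eq, hP.eq]
  simp only [Matrix.mul_add, Matrix.add_mul, Matrix.mul_smul, Matrix.smul_mul, Matrix.mul_one,
    Matrix.one_mul, ← mul_assoc, sub_smul]
  abel

theorem PosDef.isUnit_I_mul_smul_one_add_mul [DecidableEq n] {G P : Matrix n n ℂ}
    (hG : G.PosDef) (hP : P.PosDef) {w : ℝ} (hw : w ≠ 0) :
    IsUnit ((Complex.I * w) • (1 : Matrix n n ℂ) + G * P) := by
  have hμ : -(Complex.I * w) ∉ spectrum ℂ (G * P) := fun h => by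
    have := (Complex.lt_def.mp (hG.pos_of_mem_spectrum_mul hP h)).2
    simp_all
  rwa [spectrum.notMem_iff, Algebra.algebraMap_eq_smul_one, neg_smul, ← neg_add',
    IsUnit.neg_iff] at hμ

theorem PosDef.posDef_I_smul_inv_mul_sub_conjTranspose [DecidableEq n]
    {G P : Matrix n n ℂ} (hG : G.PosDef) (hP : P.PosDef) {w : ℝ} (hw : 0 < w) :
    (Complex.I • (((Complex.I * w) • (1 : Matrix n n ℂ) + G * P)⁻¹ * G -
      (((Complex.I * w) • (1 : Matrix n n ℂ) + G * P)⁻¹ * G)ᴴ)).PosDef := by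
  have hM := hG.isUnit_I_mul_smul_one_add_mul hP hw.ne'
  have hscalar : Complex.I * (star (Complex.I * w) - Complex.I * w) = ((2 * w : ℝ) : ℂ) := by
    rw [star_mul', Complex.star_def, Complex.conj_I, Complex.conj_ofReal]
    push_cast
    linear_combination (-2 * w : ℂ) * Complex.I_sq
  rw [nonsing_inv_mul_sub_conjTranspose hM hG.1, hG.1.mul_conjTranspose_sub_mul hP.1,
    Matrix.mul_smul, Matrix.smul_mul, smul_smul, hscalar, ← star_eq_conjTranspose]
  exact ((isUnit_nonsing_inv_iff.mpr hM).posDef_star_right_conjugate_iff.mpr hG).smul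
    (by exact_mod_cast (by positivity : (0 : ℝ) < 2 * w))

end Matrix

/-- Integral resonant controllers are strictly negative imaginary. -/
theorem integral_resonant_controller_sni {m : ℕ} (Γ Φ : Matrix (Fin m) (Fin m) ℝ)
    (hΓ : Γ.PosDef) (hΦ : Φ.PosDef) :
    (∀ μ ∈ spectrum ℂ ((-(Γ * Φ)).map Complex.ofReal), μ.re < 0) ∧
    (∀ w : ℝ, 0 < w →
      (Complex.I •
        ((((Complex.I * w) • (1 : Matrix (Fin m) (Fin m) ℂ) + (Γ * Φ).map Complex.ofReal)⁻¹ *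
            Γ.map Complex.ofReal) -
          (((Complex.I * w) • (1 : Matrix (Fin m) (Fin m) ℂ) + (Γ * Φ).map Complex.ofReal)⁻¹ *
            Γ.map Complex.ofReal)ᴴ)).PosDef) := by
  have hmap : (Γ * Φ).map Complex.ofReal = Γ.map Complex.ofReal * Φ.map Complex.ofReal :=
    Matrix.map_mul (f := Complex.ofRealHom)
  refine ⟨fun μ hμ => ?_, fun w hw => ?_⟩
  · rw [Matrix.map_neg _ Complex.ofReal_neg, hmap, ← spectrum.neg_eq, Set.mem_neg] at hμ
    have := (Complex.lt_def.mp (hΓ.map_ofReal.pos_of_mem_spectrum_mul hΦ.map_ofReal hμ)).1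
    simpa using this
  · rw [hmap]
    exact hΓ.map_ofReal.posDef_I_smul_inv_mul_sub_conjTranspose hΦ.map_ofReal hw
end
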